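/- Under the setup of the previous statement (f differentiable with Jacobian J; v_i = J(x_i) p_i, w_i = (J(x_j) − J(x_i)) p_i, matrices P_j, V_j, W_j with these columns; r_j = −f(x_j), y_j = V_j^T r_j, x_{j+1} = x_j + P_j y_j, r_{j+1} = −f(x_{j+1}), r̃_{j+1} = r_j − V_j y_j, s_j = f(x_{j+1}) − f(x_j) − J(x_j)(x_{j+1} − x_j)), assume in addition that the columns of V_j are orthonormal. Then ‖r̃_{j+1} − r_{j+1}‖₂ ≤ ‖W_j‖₂ ‖r_j‖₂ + ‖s_j‖₂, where ‖W_j‖₂ is the operator 2-norm of W_j. -/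

import Mathlib

open Matrix

noncomputable def norm2 {n : ℕ} (x : Fin n → ℝ) : ℝ := Real.sqrt (x ⬝ᵥ x)

noncomputable def opNorm2 {n m : ℕ} (W : Matrix (Fin n) (Fin m) ℝ) : ℝ :=
  ‖LinearMap.toContinuousLinearMap (Matrix.toEuclideanLin W)‖

/-!
Write `x = x_j`, `A = J(x_j)` and `y = y_j`. Since the columns of `W` are `A p_i - v_i`, we have
`A P - V = W`, so with `r_j = -f(x)` and `x_{j+1} = x + P y` the deviation telescopes to
`r̃_{j+1} - r_{j+1} = W y + s_j`. The triangle inequality and the operator-norm bound then reduce the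
claim to `‖y‖ ≤ ‖r_j‖`: as `V` is an isometry, `‖y‖² = ⟨V y, r_j⟩ ≤ ‖y‖ ‖r_j‖`.
-/

lemma norm2_eq_norm_toLp {n : ℕ} (x : Fin n → ℝ) : norm2 x = ‖WithLp.toLp 2 x‖ := by
  rw [norm_eq_sqrt_real_inner, EuclideanSpace.inner_toLp_toLp, star_trivial, norm2]

lemma norm2_nonneg {n : ℕ} (x : Fin n → ℝ) : 0 ≤ norm2 x := Real.sqrt_nonneg _

lemma norm2_add_le {n : ℕ} (x y : Fin n → ℝ) : norm2 (x + y) ≤ norm2 x + norm2 y := by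
  simpa only [norm2_eq_norm_toLp, WithLp.toLp_add] using norm_add_le (WithLp.toLp 2 x) _

lemma real_dotProduct_le_norm2_mul_norm2 {n : ℕ} (x y : Fin n → ℝ) :
    x ⬝ᵥ y ≤ norm2 x * norm2 y := by
  simpa only [norm2_eq_norm_toLp, EuclideanSpace.inner_toLp_toLp, star_trivial,
    dotProduct_comm y] using real_inner_le_norm (WithLp.toLp 2 x) (WithLp.toLp 2 y)

lemma opNorm2_nonneg {n m : ℕ} (M : Matrix (Fin n) (Fin m) ℝ) : 0 ≤ opNorm2 M :=
  norm_nonneg _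

lemma norm2_mulVec_le {n m : ℕ} (M : Matrix (Fin n) (Fin m) ℝ) (y : Fin m → ℝ) :
    norm2 (M *ᵥ y) ≤ opNorm2 M * norm2 y := by
  rw [norm2_eq_norm_toLp, norm2_eq_norm_toLp]
  exact (LinearMap.toContinuousLinearMap (toEuclideanLin M)).le_opNorm (WithLp.toLp 2 y)

lemma norm2_mulVec_of_transpose_mul_self_eq_one {n m : ℕ} {V : Matrix (Fin n) (Fin m) ℝ}
    (hV : Vᵀ * V = 1) (y : Fin m → ℝ) : norm2 (V *ᵥ y) = norm2 y := by
  rw [norm2, norm2, dotProduct_mulVec, vecMul_mulVec, hV, vecMul_one]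

lemma norm2_transpose_mulVec_le {n m : ℕ} {V : Matrix (Fin n) (Fin m) ℝ}
    (hV : Vᵀ * V = 1) (r : Fin n → ℝ) : norm2 (Vᵀ *ᵥ r) ≤ norm2 r := by
  set y := Vᵀ *ᵥ r
  have hy : norm2 y ^ 2 ≤ norm2 y * norm2 r :=
    calc norm2 y ^ 2 = y ⬝ᵥ y := Real.sq_sqrt (dotProduct_self_star_nonneg y)
      _ = (V *ᵥ y) ⬝ᵥ r := by rw [dotProduct_mulVec, vecMul_transpose]
      _ ≤ norm2 (V *ᵥ y) * norm2 r := real_dotProduct_le_norm2_mul_norm2 _ _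
      _ = norm2 y * norm2 r := by rw [norm2_mulVec_of_transpose_mul_self_eq_one hV]
  nlinarith [norm2_nonneg y, norm2_nonneg r]

lemma mul_apply_eq_mulVec_col {R l m n : Type*} [NonUnitalNonAssocSemiring R] [Fintype m]
    (A : Matrix l m R) {P : Matrix m n R} {ps : n → m → R} (hP : ∀ a i, P a i = ps i a)
    (a : l) (i : n) : (A * P) a i = (A *ᵥ ps i) a := by
  simp only [mul_apply, mulVec, dotProduct, hP]

lemma neg_sub_neg_eq_mulVec_add_linearization_error {R m n : Type*} [CommRing R] [Fintype m]
    [Fintype n] (f : (m → R) → m → R) {A : Matrix m m R} {P V W : Matrix m n R}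
    (hW : A * P - V = W) (x : m → R) (y : n → R) :
    (-f x - V *ᵥ y) - -f (x + P *ᵥ y) =
      W *ᵥ y + (f (x + P *ᵥ y) - f x - A *ᵥ (x + P *ᵥ y - x)) := by
  rw [add_sub_cancel_left, ← hW, sub_mulVec, mulVec_mulVec]
  abel

theorem nltgcr_residual_deviation_bound_general {n k : ℕ}
    (f : (Fin n → ℝ) → (Fin n → ℝ))
    (J : (Fin n → ℝ) → Matrix (Fin n) (Fin n) ℝ)
    (xs ps : Fin (k + 1) → (Fin n → ℝ))
    (P V W : Matrix (Fin n) (Fin (k + 1)) ℝ)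
    (hP : ∀ a i, P a i = ps i a)
    (hV : ∀ a i, V a i = (J (xs i)).mulVec (ps i) a)
    (hW : ∀ a i, W a i = ((J (xs (Fin.last k)) - J (xs i)).mulVec (ps i)) a)
    (hVorth : Vᵀ * V = 1)
    (rj yj xnext rnext rtilde sj : _)
    (hrj : rj = -f (xs (Fin.last k)))
    (hyj : yj = Vᵀ.mulVec rj)
    (hxnext : xnext = xs (Fin.last k) + P.mulVec yj)
    (hrnext : rnext = -f xnext)
    (hrtilde : rtilde = rj - V.mulVec yj)
    (hsj : sj = f xnext - f (xs (Fin.last k))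
      - (J (xs (Fin.last k))).mulVec (xnext - xs (Fin.last k))) :
    norm2 (rtilde - rnext) ≤ opNorm2 W * norm2 rj + norm2 sj := by
  have hJPV : J (xs (Fin.last k)) * P - V = W := by
    ext a i
    rw [Matrix.sub_apply, mul_apply_eq_mulVec_col _ hP, hV, hW, sub_mulVec, Pi.sub_apply]
  have hdev : rtilde - rnext = W *ᵥ yj + sj := by
    rw [hrtilde, hrnext, hsj, hxnext, hrj]
    exact neg_sub_neg_eq_mulVec_add_linearization_error f hJPV _ _
  have hy : norm2 yj ≤ norm2 rj := hyj ▸ norm2_transpose_mulVec_le hVorth rj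
  calc norm2 (rtilde - rnext) = norm2 (W *ᵥ yj + sj) := by rw [hdev]
    _ ≤ norm2 (W *ᵥ yj) + norm2 sj := norm2_add_le _ _
    _ ≤ opNorm2 W * norm2 yj + norm2 sj := by gcongr; exact norm2_mulVec_le W yj
    _ ≤ opNorm2 W * norm2 rj + norm2 sj := by gcongr; exact opNorm2_nonneg W

/-- norm-bound part of Proposition 2 of the paper.
Under the setup of Statement 1, if in addition the columns of `V` are orthonormal, then
`‖r̃_{j+1} - r_{j+1}‖₂ ≤ ‖W‖₂ ‖r_j‖₂ + ‖s_j‖₂`. -/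
theorem nltgcr_residual_deviation_bound {n k : ℕ}
    (f : (Fin n → ℝ) → (Fin n → ℝ))
    (J : (Fin n → ℝ) → Matrix (Fin n) (Fin n) ℝ)
    (hf : ∀ x, HasFDerivAt f
      (LinearMap.toContinuousLinearMap (Matrix.mulVecLin (J x))) x)
    (xs ps : Fin (k + 1) → (Fin n → ℝ))
    (P V W : Matrix (Fin n) (Fin (k + 1)) ℝ)
    (hP : ∀ a i, P a i = ps i a)
    (hV : ∀ a i, V a i = (J (xs i)).mulVec (ps i) a)
    (hW : ∀ a i, W a i = ((J (xs (Fin.last k)) - J (xs i)).mulVec (ps i)) a)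
    (hVorth : Vᵀ * V = 1)
    (rj yj xnext rnext rtilde sj : _)
    (hrj : rj = -f (xs (Fin.last k)))
    (hyj : yj = Vᵀ.mulVec rj)
    (hxnext : xnext = xs (Fin.last k) + P.mulVec yj)
    (hrnext : rnext = -f xnext)
    (hrtilde : rtilde = rj - V.mulVec yj)
    (hsj : sj = f xnext - f (xs (Fin.last k))
      - (J (xs (Fin.last k))).mulVec (xnext - xs (Fin.last k))) :
    norm2 (rtilde - rnext) ≤ opNorm2 W * norm2 rj + norm2 sj :=
  nltgcr_residual_deviation_bound_general f J xs ps P V W hP hV hW hVorth rj yj xnext rnext rtilde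
    sj hrj hyj hxnext hrnext hrtilde hsj
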